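/- Let C be a finite multiset of instance values with P(C) ≥ 1. Let C_worst ⊆ C be the sub-multiset consisting of all negative elements of C together with one positive element of C whose prediction value is minimal among the positives of C, and set b_PRAUC(C) = PRAUC(C_worst). Then b_PRAUC(C) is a tight lower bound for PRAUC over sub-multisets: (i) for every sub-multiset C' ⊆ C with P(C') ≥ 1, PRAUC(C') ≥ b_PRAUC(C); and (ii) there exists a sub-multiset C' ⊆ C with P(C') ≥ 1 such that PRAUC(C') = b_PRAUC(C). -/

import Mathlib

/-- An instance value: a label (`true` = positive, i.e. `y = 1`;
`false` = negative, i.e. `y = 0`) together with a real prediction score. -/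
abbrev Inst : Type := Bool × ℝ

/-- `P C`: the number of positive elements of `C`. -/
def P (C : Multiset Inst) : ℕ := (C.filter (fun c => c.1 = true)).card

/-- `N C`: the number of negative elements of `C`. -/
def N (C : Multiset Inst) : ℕ := (C.filter (fun c => c.1 = false)).card

/-- `TP C t`: the number of positives of `C` with prediction strictly above `t`. -/
noncomputable def TP (C : Multiset Inst) (t : ℝ) : ℕ :=
  (C.filter (fun c => c.1 = true ∧ t < c.2)).card

/-- `FP C t`: the number of negatives of `C` with prediction strictly above `t`. -/
noncomputable def FP (C : Multiset Inst) (t : ℝ) : ℕ :=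
  (C.filter (fun c => c.1 = false ∧ t < c.2)).card

/-- The ROC/PR supporting points `(TP, FP)` of `C`, listed in order of
decreasing threshold, for `t` ranging over the prediction values occurring in
`C` together with `t = -∞` (the latter yielding the final point `(P C, N C)`). -/
noncomputable def supportingPoints (C : Multiset Inst) : List (ℝ × ℝ) :=
  (((C.map Prod.snd).toFinset.sort (· ≤ ·)).reverse.map
    (fun t => ((TP C t : ℝ), (FP C t : ℝ)))) ++ [((P C : ℝ), (N C : ℝ))]

/-- The trapezoidal sum `Σ_{i=2}^{k} |FP_i − FP_{i−1}| · (TP_i + TP_{i−1})/2`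
over a list of `(TP, FP)` points. -/
noncomputable def trapROC : List (ℝ × ℝ) → ℝ
  | [] => 0
  | [_] => 0
  | a :: b :: l => |b.2 - a.2| * (b.1 + a.1) / 2 + trapROC (b :: l)

/-- The area under the ROC curve of `C` (defined whenever `P C ≥ 1` and `N C ≥ 1`). -/
noncomputable def ROCAUC (C : Multiset Inst) : ℝ :=
  trapROC (supportingPoints C) / ((P C : ℝ) * (N C : ℝ))

/-- The trapezoidal sum `Σ_{i=2}^{k} |TP_i − TP_{i−1}| ·
(TP_i/(TP_i+FP_i) + TP_{i−1}/(TP_{i−1}+FP_{i−1}))/2` over a list of `(TP, FP)`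
points; in `ℝ`, division by zero yields `0`, realizing the convention `0/0 = 0`. -/
noncomputable def trapPR : List (ℝ × ℝ) → ℝ
  | [] => 0
  | [_] => 0
  | a :: b :: l =>
      |b.1 - a.1| * (b.1 / (b.1 + b.2) + a.1 / (a.1 + a.2)) / 2 + trapPR (b :: l)

/-- The (linearly interpolated) area under the PR curve of `C`
(defined whenever `P C ≥ 1`). -/
noncomputable def PRAUC (C : Multiset Inst) : ℝ :=
  trapPR (supportingPoints C) / (P C : ℝ)

/-!
Let `v` be the least score of a positive of `C` and `m` the number of negatives of `C` scoring
at least `v`. In a sub-multiset `C'` with a positive, whenever `TP` increases between two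
consecutive thresholds `t' < t`, some positive scores in `(t', t]`; as no score lies strictly
between `t'` and `t`, every negative counted at `t'` scores at least that positive, hence at
least `v`, so the point at `t'` has precision at least `1 / (1 + m)`. Each trapezoid
thus has area at least `ΔTP / (2 (1 + m))`, and `PRAUC C' ≥ 1 / (2 (1 + m))`. In `C_worst` the
single positive makes `TP` jump once, from precision `0` to precision `1 / (1 + m)`, so
`PRAUC C_worst = 1 / (2 (1 + m))`, and `C_worst` is itself a sub-multiset attaining the bound.
-/

namespace Multiset

variable {α : Type*} {s : Multiset α} {p q : α → Prop} [DecidablePred p] [DecidablePred q]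

theorem card_filter_le_card_filter (h : ∀ a ∈ s, p a → q a) :
    card (s.filter p) ≤ card (s.filter q) := by
  simp only [← countP_eq_card_filter]
  induction s using Quot.inductionOn
  exact List.countP_mono_left (by simpa using h)

theorem exists_mem_of_card_filter_lt (h : card (s.filter q) < card (s.filter p)) :
    ∃ a ∈ s, p a ∧ ¬q a := by
  by_contra! hpq
  exact (card_filter_le_card_filter hpq).not_gt h

end Multiset

theorem List.SortedGT.isChain_lt_and_notMem_Ioo {α : Type*} [LinearOrder α] {l : List α}
    (hl : l.SortedGT) : l.IsChain fun x y => y < x ∧ ∀ v ∈ l, v ∉ Set.Ioo y x := by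
  rw [List.isChain_iff_getElem]
  intro i hi
  refine ⟨hl.getElem_lt_getElem_iff.2 (by omega), fun v hv ⟨hyv, hvx⟩ => ?_⟩
  obtain ⟨j, hj, rfl⟩ := List.getElem_of_mem hv
  rcases le_or_gt j i with hji | hij
  · exact (hl.getElem_le_getElem_iff.2 hji).not_gt hvx
  · exact (hl.getElem_le_getElem_iff.2 hij).not_gt hyv

theorem List.SortedGT.le_of_getLast?_eq {α : Type*} [LinearOrder α] {l : List α} {a : α}
    (hl : l.SortedGT) (ha : l.getLast? = some a) : ∀ b ∈ l, a ≤ b := by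
  obtain ⟨l', rfl⟩ := List.getLast?_eq_some_iff.1 ha
  have := List.pairwise_append.1 hl.pairwise
  simp only [List.mem_append, List.mem_singleton]
  rintro b (hb | rfl)
  · exact (this.2.2 b hb a (List.mem_singleton_self a)).le
  · exact le_rfl

theorem List.SortedGT.le_of_head?_eq {α : Type*} [LinearOrder α] {l : List α} {a : α}
    (hl : l.SortedGT) (ha : l.head? = some a) : ∀ b ∈ l, b ≤ a := by
  obtain ⟨l', rfl⟩ := List.head?_eq_some_iff.1 ha
  rintro b (_ | ⟨_, hb⟩)
  · exact le_rfl
  · exact (List.rel_of_pairwise_cons hl.pairwise hb).le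

noncomputable def supportingPoint (D : Multiset Inst) (t : ℝ) : ℝ × ℝ :=
  ((TP D t : ℝ), (FP D t : ℝ))

@[simp]
theorem supportingPoint_fst (D : Multiset Inst) (t : ℝ) : (supportingPoint D t).1 = TP D t :=
  rfl

@[simp]
theorem supportingPoint_snd (D : Multiset Inst) (t : ℝ) : (supportingPoint D t).2 = FP D t :=
  rfl

noncomputable def thresholds (D : Multiset Inst) : List ℝ :=
  ((D.map Prod.snd).toFinset.sort (· ≤ ·)).reverse

theorem sortedGT_thresholds (D : Multiset Inst) : (thresholds D).SortedGT :=
  (Finset.sortedLT_sort _).reverse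

theorem mem_thresholds {D : Multiset Inst} {e : Inst} (he : e ∈ D) : e.2 ∈ thresholds D := by
  rw [thresholds, List.mem_reverse, Finset.mem_sort, Multiset.mem_toFinset]
  exact Multiset.mem_map_of_mem _ he

theorem supportingPoints_eq (D : Multiset Inst) :
    supportingPoints D = (thresholds D).map (supportingPoint D) ++ [((P D : ℝ), (N D : ℝ))] :=
  rfl

theorem TP_antitone (D : Multiset Inst) : Antitone (TP D) := fun _ _ hst =>
  Multiset.card_filter_le_card_filter fun _ _ he => ⟨he.1, hst.trans_lt he.2⟩

theorem TP_le_P (D : Multiset Inst) (t : ℝ) : TP D t ≤ P D :=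
  Multiset.card_filter_le_card_filter fun _ _ he => he.1

theorem exists_mem_Ioc_of_TP_lt {D : Multiset Inst} {t t' : ℝ} (h : TP D t < TP D t') :
    ∃ e ∈ D, e.1 = true ∧ e.2 ∈ Set.Ioc t' t := by
  obtain ⟨e, he, ⟨hpos, ht'⟩, hnot⟩ := Multiset.exists_mem_of_card_filter_lt h
  exact ⟨e, he, hpos, ht', not_lt.1 fun ht => hnot ⟨hpos, ht⟩⟩

theorem supportingPoint_of_forall_le {D : Multiset Inst} {t : ℝ} (h : ∀ e ∈ D, e.2 ≤ t) :
    supportingPoint D t = (0, 0) := by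
  simp only [supportingPoint, TP, FP, Nat.cast_eq_zero, Multiset.card_eq_zero,
    Multiset.filter_eq_nil, Prod.mk.injEq]
  exact ⟨fun e he hlt => (h e he).not_gt hlt.2, fun e he hlt => (h e he).not_gt hlt.2⟩

theorem supportingPoint_of_forall_lt {D : Multiset Inst} {t : ℝ} (h : ∀ e ∈ D, t < e.2) :
    supportingPoint D t = ((P D : ℝ), (N D : ℝ)) := by
  simp only [supportingPoint, TP, FP, P, N, Prod.mk.injEq, Nat.cast_inj]
  constructor <;> exact congrArg _ (Multiset.filter_congr fun e he => and_iff_left (h e he))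

theorem supportingPoints_head? {D : Multiset Inst} (hD : D ≠ 0) :
    (supportingPoints D).head? = some (0, 0) := by
  obtain ⟨e, he⟩ := Multiset.exists_mem_of_ne_zero hD
  obtain ⟨t, l, htl⟩ := List.exists_cons_of_ne_nil (List.ne_nil_of_mem (mem_thresholds he))
  have hmax : ∀ e ∈ D, e.2 ≤ t := fun e he =>
    (sortedGT_thresholds D).le_of_head?_eq (by simp [htl]) _ (mem_thresholds he)
  rw [supportingPoints_eq, htl, List.map_cons, List.cons_append, List.head?_cons,
    supportingPoint_of_forall_le hmax]

theorem supportingPoints_getLast? (D : Multiset Inst) :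
    (supportingPoints D).getLast? = some ((P D : ℝ), (N D : ℝ)) := by
  simp [supportingPoints]

theorem isChain_supportingPoints (D : Multiset Inst) {R : ℝ × ℝ → ℝ × ℝ → Prop}
    (h : ∀ t t', t' < t → (∀ e ∈ D, e.2 ∉ Set.Ioo t' t) →
      R (supportingPoint D t) (supportingPoint D t')) :
    (supportingPoints D).IsChain R := by
  rw [supportingPoints_eq, List.isChain_append]
  refine ⟨?_, List.isChain_singleton _, ?_⟩
  · rw [List.isChain_map]
    exact (sortedGT_thresholds D).isChain_lt_and_notMem_Ioo.imp fun t t' ⟨hlt, hgap⟩ =>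
      h t t' hlt fun e he => hgap _ (mem_thresholds he)
  · intro x hx y hy
    rw [List.getLast?_map] at hx
    obtain ⟨t, ht, rfl⟩ := Option.map_eq_some_iff.1 hx
    obtain rfl : y = ((P D : ℝ), (N D : ℝ)) := by simpa using hy.symm
    -- the final point `(P D, N D)` is the point at `t - 1`, `t` being the least prediction value
    have hmin : ∀ e ∈ D, t ≤ e.2 := fun e he =>
      (sortedGT_thresholds D).le_of_getLast?_eq ht _ (mem_thresholds he)
    rw [← supportingPoint_of_forall_lt fun e he => sub_one_lt t |>.trans_le (hmin e he)]
    exact h t (t - 1) (sub_one_lt t) fun e he hmem => (hmin e he).not_gt hmem.2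

noncomputable def precision (p : ℝ × ℝ) : ℝ := p.1 / (p.1 + p.2)

theorem precision_nonneg {p : ℝ × ℝ} (h₁ : 0 ≤ p.1) (h₂ : 0 ≤ p.2) : 0 ≤ precision p :=
  div_nonneg h₁ (add_nonneg h₁ h₂)

theorem one_div_one_add_le_precision {p : ℝ × ℝ} {m : ℝ} (h₁ : 1 ≤ p.1) (h₂ : 0 ≤ p.2)
    (hm : p.2 ≤ m) : 1 / (1 + m) ≤ precision p := by
  rw [precision, div_le_div_iff₀ (by linarith) (by linarith)]
  nlinarith

theorem trapPR_cons_cons (a b : ℝ × ℝ) (l : List (ℝ × ℝ)) :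
    trapPR (a :: b :: l) = |b.1 - a.1| * (precision b + precision a) / 2 + trapPR (b :: l) :=
  rfl

section trapPR

variable {c : ℝ} {L : List (ℝ × ℝ)} {x z : ℝ × ℝ}

theorem le_trapPR_of_isChain
    (hL : L.IsChain fun p q => p.1 ≤ q.1 ∧ (p.1 < q.1 → c ≤ precision p + precision q))
    (hx : L.head? = some x) (hz : L.getLast? = some z) : (z.1 - x.1) * c / 2 ≤ trapPR L := by
  induction L generalizing x with
  | nil => simp at hx
  | cons a l ih =>
    obtain rfl : a = x := by simpa using hx
    cases l with
    | nil =>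
      obtain rfl : a = z := by simpa using hz
      simp [trapPR]
    | cons b l =>
      obtain ⟨⟨hle, hjump⟩, hL⟩ := List.isChain_cons_cons.1 hL
      have hrest := ih hL rfl (by simpa using hz)
      have hstep : (b.1 - a.1) * c ≤ (b.1 - a.1) * (precision b + precision a) := by
        rcases hle.eq_or_lt with heq | hlt
        · simp [heq]
        · exact mul_le_mul_of_nonneg_left (by linarith [hjump hlt]) (by linarith)
      rw [trapPR_cons_cons, abs_of_nonneg (sub_nonneg.2 hle)]
      linarith

theorem trapPR_le_of_isChain
    (hL : L.IsChain fun p q => p.1 ≤ q.1 ∧ (p.1 < q.1 → precision p + precision q ≤ c))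
    (hx : L.head? = some x) (hz : L.getLast? = some z) : trapPR L ≤ (z.1 - x.1) * c / 2 := by
  induction L generalizing x with
  | nil => simp at hx
  | cons a l ih =>
    obtain rfl : a = x := by simpa using hx
    cases l with
    | nil =>
      obtain rfl : a = z := by simpa using hz
      simp [trapPR]
    | cons b l =>
      obtain ⟨⟨hle, hjump⟩, hL⟩ := List.isChain_cons_cons.1 hL
      have hrest := ih hL rfl (by simpa using hz)
      have hstep : (b.1 - a.1) * (precision b + precision a) ≤ (b.1 - a.1) * c := by
        rcases hle.eq_or_lt with heq | hlt
        · simp [heq]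
        · exact mul_le_mul_of_nonneg_left (by linarith [hjump hlt]) (by linarith)
      rw [trapPR_cons_cons, abs_of_nonneg (sub_nonneg.2 hle)]
      linarith

end trapPR

theorem one_div_one_add_div_two_le_PRAUC {D : Multiset Inst} {v : ℝ} {m : ℕ} (hP : 1 ≤ P D)
    (hpos : ∀ e ∈ D, e.1 = true → v ≤ e.2)
    (hm : (D.filter fun e => e.1 = false ∧ v ≤ e.2).card ≤ m) :
    1 / (1 + (m : ℝ)) / 2 ≤ PRAUC D := by
  have hD : D ≠ 0 := by rintro rfl; simp [P] at hP
  have hchain : (supportingPoints D).IsChain fun p q =>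
      p.1 ≤ q.1 ∧ (p.1 < q.1 → 1 / (1 + (m : ℝ)) ≤ precision p + precision q) := by
    refine isChain_supportingPoints D fun t t' htt' hgap => ?_
    simp only [supportingPoint_fst, Nat.cast_le, Nat.cast_lt]
    refine ⟨TP_antitone D htt'.le, fun hjump => ?_⟩
    obtain ⟨e, he, hepos, het', het⟩ := exists_mem_Ioc_of_TP_lt hjump
    -- a negative above `t'` lies above `t`, hence above the positive `e`, hence above `v`
    have hFP : FP D t' ≤ m := by
      refine (Multiset.card_filter_le_card_filter fun e' he' ⟨hneg, hlt⟩ => ⟨hneg, ?_⟩).trans hm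
      exact (hpos e he hepos).trans <| het.trans <| not_lt.1 fun h => hgap e' he' ⟨hlt, h⟩
    have hTP : 1 ≤ TP D t' := by exact_mod_cast (Nat.zero_le _).trans_lt hjump
    have := one_div_one_add_le_precision (p := supportingPoint D t') (m := m)
      (by simpa using hTP) (Nat.cast_nonneg _) (by simpa using hFP)
    linarith [precision_nonneg (p := supportingPoint D t) (Nat.cast_nonneg _) (Nat.cast_nonneg _)]
  have := le_trapPR_of_isChain hchain (supportingPoints_head? hD) (supportingPoints_getLast? D)
  rw [PRAUC, le_div_iff₀ (by exact_mod_cast hP)]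
  linarith

theorem PRAUC_le_one_div_one_add_div_two {D : Multiset Inst} {v : ℝ} (hP : P D = 1)
    (hpos : ∀ e ∈ D, e.1 = true → e.2 ≤ v) :
    PRAUC D ≤ 1 / (1 + ((D.filter fun e => e.1 = false ∧ v ≤ e.2).card : ℝ)) / 2 := by
  set m := (D.filter fun e => e.1 = false ∧ v ≤ e.2).card
  have hD : D ≠ 0 := by rintro rfl; simp [P] at hP
  have hchain : (supportingPoints D).IsChain fun p q =>
      p.1 ≤ q.1 ∧ (p.1 < q.1 → precision p + precision q ≤ 1 / (1 + (m : ℝ))) := by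
    refine isChain_supportingPoints D fun t t' htt' _ => ?_
    simp only [supportingPoint_fst, Nat.cast_le, Nat.cast_lt]
    refine ⟨TP_antitone D htt'.le, fun hjump => ?_⟩
    obtain ⟨e, he, hepos, het', -⟩ := exists_mem_Ioc_of_TP_lt hjump
    have hTP : TP D t = 0 ∧ TP D t' = 1 := by have := TP_le_P D t'; omega
    have hFP : m ≤ FP D t' := Multiset.card_filter_le_card_filter fun e' _ ⟨hneg, hle⟩ =>
      ⟨hneg, het'.trans_le <| (hpos e he hepos).trans hle⟩
    have hprec : precision (supportingPoint D t') ≤ 1 / (1 + (m : ℝ)) := by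
      rw [precision, supportingPoint_fst, supportingPoint_snd, hTP.2, Nat.cast_one]
      gcongr
    have hprec₀ : precision (supportingPoint D t) = 0 := by simp [precision, hTP.1]
    linarith
  have := trapPR_le_of_isChain hchain (supportingPoints_head? hD) (supportingPoints_getLast? D)
  rw [PRAUC, hP, Nat.cast_one, div_one]
  simpa [hP] using this

theorem bPRAUC_tight_lower_bound_general (C : Multiset Inst)
    (c₀ : Inst) (hc₀ : c₀ ∈ C) (hpos : c₀.1 = true)
    (hmin : ∀ c ∈ C, c.1 = true → c₀.2 ≤ c.2) :
    (∀ C' ≤ C, 1 ≤ P C' →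
      PRAUC (c₀ ::ₘ C.filter (fun c => c.1 = false)) ≤ PRAUC C') ∧
    (∃ C' ≤ C, 1 ≤ P C' ∧
      PRAUC C' = PRAUC (c₀ ::ₘ C.filter (fun c => c.1 = false))) := by
  set W := c₀ ::ₘ C.filter (fun c => c.1 = false)
  set m := (C.filter fun e => e.1 = false ∧ c₀.2 ≤ e.2).card
  have hc₀W : c₀ ∉ C.filter (fun c => c.1 = false) := by simp [hpos]
  have hWC : W ≤ C := (Multiset.cons_le_of_notMem hc₀W).2 ⟨hc₀, Multiset.filter_le _ _⟩
  have hPW : P W = 1 := by simp [W, P, hpos, Multiset.filter_filter]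
  have hWpos : ∀ e ∈ W, e.1 = true → e.2 ≤ c₀.2 := by simp +contextual [W]
  have hmW : (W.filter fun e => e.1 = false ∧ c₀.2 ≤ e.2).card = m := by
    rw [Multiset.filter_cons_of_neg _ (by simp [hpos]), Multiset.filter_filter]
    exact congrArg _ (Multiset.filter_congr fun e _ => and_iff_left_of_imp And.left)
  have hupper : PRAUC W ≤ 1 / (1 + (m : ℝ)) / 2 :=
    hmW ▸ PRAUC_le_one_div_one_add_div_two hPW hWpos
  refine ⟨fun C' hC' hP' => hupper.trans ?_, W, hWC, hPW.ge, rfl⟩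
  exact one_div_one_add_div_two_le_PRAUC hP' (fun e he => hmin e (Multiset.mem_of_le hC' he))
    (Multiset.card_le_card (Multiset.filter_le_filter _ hC'))

/-- Let `c₀` be a positive element of `C` whose prediction
value is minimal among the positives of `C`, and let
`C_worst = {c₀} ∪ (negatives of C)`.  Then `b_PRAUC C = PRAUC C_worst` is a
tight lower bound for the PR AUC over sub-multisets of `C`. -/
theorem bPRAUC_tight_lower_bound (C : Multiset Inst) (hP : 1 ≤ P C)
    (c₀ : Inst) (hc₀ : c₀ ∈ C) (hpos : c₀.1 = true)
    (hmin : ∀ c ∈ C, c.1 = true → c₀.2 ≤ c.2) :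
    (∀ C' ≤ C, 1 ≤ P C' →
      PRAUC (c₀ ::ₘ C.filter (fun c => c.1 = false)) ≤ PRAUC C') ∧
    (∃ C' ≤ C, 1 ≤ P C' ∧
      PRAUC C' = PRAUC (c₀ ::ₘ C.filter (fun c => c.1 = false))) :=
  bPRAUC_tight_lower_bound_general C c₀ hc₀ hpos hmin
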